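/- Let g : ℝ → ℝ be Borel measurable with |g(x)| ≤ C(1 + |x|^p) for some constants C > 0 and p ≥ 0, and define Φ(x) = ∫_ℝ g(xz) dγ(z), where γ is the standard Gaussian measure on ℝ. Then Φ is continuously differentiable on ℝ \ {0}; in particular, Φ′ is bounded on every bounded closed subset of ℝ not containing 0. -/

import Mathlib

/-! For `σ ≠ 0` the substitution `u = σ z` writes `Φ σ = ∫ φ_σ(u) g(u) du`, where `φ_σ` is the
density of `N(0, σ²)`. Its `σ`-derivative `φ_σ(u) (u²/σ³ - 1/σ)` is dominated, locally uniformly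
in `σ ≠ 0`, by `K (1 + u²) e^{-c u²}`, and polynomial growth of `g` makes this weight times `g`
integrable. Hence one may differentiate under the integral sign, the derivative is continuous on
`ℝ \ {0}` by dominated convergence, and it is bounded on compact subsets of `ℝ \ {0}`. -/

open MeasureTheory ProbabilityTheory Real Set Filter Topology

lemma integrable_abs_rpow_mul_exp_neg_mul_sq {b : ℝ} (hb : 0 < b) {s : ℝ} (hs : -1 < s) :
    Integrable fun x : ℝ => |x| ^ s * exp (-b * x ^ 2) := by
  have hpos : IntegrableOn (fun x : ℝ => |x| ^ s * exp (-b * x ^ 2)) (Ioi 0) :=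
    (integrableOn_rpow_mul_exp_neg_mul_sq hb hs).congr_fun
      (fun x hx => by rw [abs_of_pos hx]) measurableSet_Ioi
  rw [← integrableOn_univ, ← Iio_union_Ici (a := (0 : ℝ)), integrableOn_union,
    integrableOn_Ici_iff_integrableOn_Ioi]
  refine ⟨?_, hpos⟩
  rw [← (Measure.measurePreserving_neg (volume : Measure ℝ)).integrableOn_comp_preimage
      (Homeomorph.neg ℝ).measurableEmbedding]
  simpa only [Function.comp_def, abs_neg, neg_sq, neg_preimage, neg_Iio, neg_zero] using hpos

lemma integrable_one_add_sq_mul_exp_neg_mul_sq_mul_of_growth {g : ℝ → ℝ}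
    (hgm : AEStronglyMeasurable g) {C p c : ℝ} (hp : 0 ≤ p) (hc : 0 < c)
    (hgrowth : ∀ x, |g x| ≤ C * (1 + |x| ^ p)) :
    Integrable fun u => (1 + u ^ 2) * exp (-c * u ^ 2) * g u := by
  have hmoment (s : ℝ) (hs : 0 ≤ s) : Integrable fun u : ℝ => |u| ^ s * exp (-c * u ^ 2) :=
    integrable_abs_rpow_mul_exp_neg_mul_sq hc (by linarith)
  have hbound : Integrable fun u : ℝ => C * ((|u| ^ (0 : ℝ) + |u| ^ (2 : ℝ) + |u| ^ p
      + |u| ^ (p + 2)) * exp (-c * u ^ 2)) := by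
    simp only [add_mul]
    exact ((((hmoment 0 le_rfl).add (hmoment 2 zero_le_two)).add (hmoment p hp)).add
      (hmoment _ (by linarith))).const_mul C
  refine hbound.mono' ((by fun_prop : Continuous fun u : ℝ => (1 + u ^ 2) * exp (-c * u ^ 2))
    |>.aestronglyMeasurable.mul hgm) (ae_of_all _ fun u => ?_)
  rw [rpow_zero, rpow_two, sq_abs, rpow_add' (abs_nonneg u) (by linarith), rpow_two, sq_abs,
    norm_mul, Real.norm_of_nonneg (by positivity), norm_eq_abs]
  calc (1 + u ^ 2) * exp (-c * u ^ 2) * |g u|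
      ≤ (1 + u ^ 2) * exp (-c * u ^ 2) * (C * (1 + |u| ^ p)) := by gcongr; exact hgrowth u
    _ = _ := by ring

noncomputable def centeredGaussianPDF (σ u : ℝ) : ℝ :=
  gaussianPDFReal 0 (NNReal.mk (σ ^ 2) (sq_nonneg σ)) u

lemma centeredGaussianPDF_eq (σ u : ℝ) :
    centeredGaussianPDF σ u = (√(2 * π * σ ^ 2))⁻¹ * exp (-u ^ 2 / (2 * σ ^ 2)) := by
  simp only [centeredGaussianPDF, gaussianPDFReal, sub_zero, NNReal.coe_mk]

lemma integral_comp_mul_gaussianReal (g : ℝ → ℝ) {σ : ℝ} (hσ : σ ≠ 0) :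
    ∫ z, g (σ * z) ∂gaussianReal 0 1 = ∫ u, centeredGaussianPDF σ u * g u := by
  have hv : NNReal.mk (σ ^ 2) (sq_nonneg σ) ≠ 0 := fun h =>
    pow_ne_zero 2 hσ (congrArg NNReal.toReal h)
  rw [← MeasurableEmbedding.integral_map (f := (σ * ·))
    (Homeomorph.mulLeft₀ σ hσ).measurableEmbedding, gaussianReal_map_const_mul, mul_zero, mul_one, integral_gaussianReal_eq_integral_smul hv]
  rfl

lemma centeredGaussianPDF_nonneg (σ u : ℝ) : 0 ≤ centeredGaussianPDF σ u :=
  gaussianPDFReal_nonneg _ _ _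

lemma measurable_centeredGaussianPDF (σ : ℝ) : Measurable (centeredGaussianPDF σ) :=
  measurable_gaussianPDFReal _ _

lemma hasDerivAt_centeredGaussianPDF (u : ℝ) {σ : ℝ} (hσ : σ ≠ 0) :
    HasDerivAt (centeredGaussianPDF · u)
      (centeredGaussianPDF σ u * (u ^ 2 / σ ^ 3 - 1 / σ)) σ := by
  have hv : 0 < 2 * π * σ ^ 2 := by positivity
  have hsqrt := ((hasDerivAt_pow 2 σ).const_mul (2 * π)).sqrt hv.ne'
  have hexp := ((hasDerivAt_const σ (-u ^ 2)).div ((hasDerivAt_pow 2 σ).const_mul 2)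
    (by positivity)).exp
  simp_rw [centeredGaussianPDF_eq]
  refine ((hsqrt.inv (by positivity)).mul hexp).congr_deriv ?_
  have hsq : √(2 * π * σ ^ 2) ^ 2 = 2 * π * σ ^ 2 := sq_sqrt hv.le
  norm_num only [Pi.div_apply, Pi.inv_apply]
  field_simp
  rw [hsq]
  ring

lemma continuousAt_centeredGaussianPDF_deriv (u : ℝ) {σ : ℝ} (hσ : σ ≠ 0) :
    ContinuousAt (fun σ => centeredGaussianPDF σ u * (u ^ 2 / σ ^ 3 - 1 / σ)) σ :=
  (hasDerivAt_centeredGaussianPDF u hσ).continuousAt.mul (by fun_prop (disch := simpa))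

lemma centeredGaussianPDF_le {a b σ : ℝ} (ha : 0 < a) (haσ : a ≤ |σ|) (hσb : |σ| ≤ b) (u : ℝ) :
    centeredGaussianPDF σ u ≤ (√(2 * π * a ^ 2))⁻¹ * exp (-(2 * b ^ 2)⁻¹ * u ^ 2) := by
  have ha2 : a ^ 2 ≤ σ ^ 2 := by rw [← sq_abs σ]; gcongr
  have hb2 : σ ^ 2 ≤ b ^ 2 := by rw [← sq_abs σ]; gcongr
  have hσ2 : 0 < σ ^ 2 := lt_of_lt_of_le (by positivity) ha2
  rw [centeredGaussianPDF_eq]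
  gcongr ?_ * exp ?_
  · gcongr
  rw [neg_div, neg_mul, neg_le_neg_iff, div_eq_inv_mul]
  gcongr

lemma abs_sq_div_pow_three_sub_one_div_le {a σ : ℝ} (ha : 0 < a) (haσ : a ≤ |σ|) (u : ℝ) :
    |u ^ 2 / σ ^ 3 - 1 / σ| ≤ (a⁻¹ ^ 3 + a⁻¹) * (1 + u ^ 2) := by
  calc |u ^ 2 / σ ^ 3 - 1 / σ| ≤ u ^ 2 / |σ| ^ 3 + 1 / |σ| := by
        have := abs_sub (u ^ 2 / σ ^ 3) (1 / σ)
        rwa [abs_div, abs_div, abs_pow, abs_pow, abs_one, sq_abs] at this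
    _ ≤ u ^ 2 / a ^ 3 + 1 / a := by gcongr
    _ ≤ (a⁻¹ ^ 3 + a⁻¹) * (1 + u ^ 2) := by
        rw [show (a⁻¹ ^ 3 + a⁻¹) * (1 + u ^ 2)
          = u ^ 2 / a ^ 3 + 1 / a + (a⁻¹ ^ 3 + a⁻¹ * u ^ 2) by ring]
        exact le_add_of_nonneg_right (by positivity)

lemma abs_centeredGaussianPDF_deriv_le {a b σ : ℝ} (ha : 0 < a) (haσ : a ≤ |σ|) (hσb : |σ| ≤ b)
    (u : ℝ) :
    |centeredGaussianPDF σ u * (u ^ 2 / σ ^ 3 - 1 / σ)|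
      ≤ (√(2 * π * a ^ 2))⁻¹ * (a⁻¹ ^ 3 + a⁻¹) * ((1 + u ^ 2) * exp (-(2 * b ^ 2)⁻¹ * u ^ 2)) := by
  rw [abs_mul, abs_of_nonneg (centeredGaussianPDF_nonneg σ u)]
  calc _ ≤ (√(2 * π * a ^ 2))⁻¹ * exp (-(2 * b ^ 2)⁻¹ * u ^ 2) * ((a⁻¹ ^ 3 + a⁻¹) * (1 + u ^ 2)) :=
        mul_le_mul (centeredGaussianPDF_le ha haσ hσb u)
          (abs_sq_div_pow_three_sub_one_div_le ha haσ u) (abs_nonneg _) (by positivity)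
    _ = _ := by ring

lemma exists_eventually_abs_centeredGaussianPDF_deriv_le {σ₀ : ℝ} (hσ₀ : σ₀ ≠ 0) :
    ∃ K c, 0 < c ∧ ∀ᶠ σ in 𝓝 σ₀, ∀ u, |centeredGaussianPDF σ u * (u ^ 2 / σ ^ 3 - 1 / σ)|
      ≤ K * ((1 + u ^ 2) * exp (-c * u ^ 2)) := by
  have h0 : 0 < |σ₀| := abs_pos.2 hσ₀
  have hnear : ∀ᶠ σ in 𝓝 σ₀, |σ| ∈ Icc (|σ₀| / 2) (2 * |σ₀|) :=
    continuous_abs.continuousAt.eventually_mem (Icc_mem_nhds (by linarith) (by linarith))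
  exact ⟨_, _, by positivity, hnear.mono fun σ hσ =>
    abs_centeredGaussianPDF_deriv_le (by positivity) hσ.1 hσ.2⟩

lemma norm_mul_le_of_abs_le_mul_weight {h y K c u : ℝ}
    (hh : |h| ≤ K * ((1 + u ^ 2) * exp (-c * u ^ 2))) :
    ‖h * y‖ ≤ K * ‖(1 + u ^ 2) * exp (-c * u ^ 2) * y‖ := by
  rw [norm_mul, norm_mul, Real.norm_of_nonneg (by positivity : 0 ≤ (1 + u ^ 2) * exp (-c * u ^ 2)),
    norm_eq_abs, ← mul_assoc]
  exact mul_le_mul_of_nonneg_right hh (norm_nonneg _)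

lemma integrable_centeredGaussianPDF_mul {g : ℝ → ℝ} (hgm : AEStronglyMeasurable g)
    (hg : ∀ c > 0, Integrable fun u => (1 + u ^ 2) * exp (-c * u ^ 2) * g u)
    {σ : ℝ} (hσ : σ ≠ 0) :
    Integrable fun u => centeredGaussianPDF σ u * g u := by
  have hσ' : 0 < |σ| := abs_pos.2 hσ
  refine ((hg _ (by positivity : 0 < (2 * |σ| ^ 2)⁻¹)).norm.const_mul
    (√(2 * π * |σ| ^ 2))⁻¹).mono'
    ((measurable_centeredGaussianPDF σ).aestronglyMeasurable.mul hgm)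
    (ae_of_all _ fun u => norm_mul_le_of_abs_le_mul_weight ?_)
  rw [abs_of_nonneg (centeredGaussianPDF_nonneg σ u)]
  refine (centeredGaussianPDF_le hσ' le_rfl le_rfl u).trans ?_
  gcongr
  exact le_mul_of_one_le_left (exp_pos _).le (by nlinarith [sq_nonneg u])

lemma hasDerivAt_integral_centeredGaussianPDF_mul {g : ℝ → ℝ} (hgm : AEStronglyMeasurable g)
    (hg : ∀ c > 0, Integrable fun u => (1 + u ^ 2) * exp (-c * u ^ 2) * g u)
    {σ₀ : ℝ} (hσ₀ : σ₀ ≠ 0) :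
    HasDerivAt (fun σ => ∫ u, centeredGaussianPDF σ u * g u)
      (∫ u, centeredGaussianPDF σ₀ u * (u ^ 2 / σ₀ ^ 3 - 1 / σ₀) * g u) σ₀ := by
  obtain ⟨K, c, hc, hK⟩ := exists_eventually_abs_centeredGaussianPDF_deriv_le hσ₀
  obtain ⟨s, hs, hKs⟩ := hK.exists_mem
  refine (hasDerivAt_integral_of_dominated_loc_of_deriv_le
    (F' := fun σ u => centeredGaussianPDF σ u * (u ^ 2 / σ ^ 3 - 1 / σ) * g u)
    (inter_mem hs (isOpen_compl_singleton.mem_nhds hσ₀))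
    (Eventually.of_forall fun σ => (measurable_centeredGaussianPDF σ).aestronglyMeasurable.mul hgm)
    (integrable_centeredGaussianPDF_mul hgm hg hσ₀)
    (((measurable_centeredGaussianPDF σ₀).mul (by fun_prop)).aestronglyMeasurable.mul hgm)
    (ae_of_all _ fun u σ hσ => norm_mul_le_of_abs_le_mul_weight (hKs σ hσ.1 u))
    ((hg c hc).norm.const_mul K)
    (ae_of_all _ fun u σ hσ => (hasDerivAt_centeredGaussianPDF u hσ.2).mul_const (g u))).2

lemma continuousOn_integral_centeredGaussianPDF_deriv_mul {g : ℝ → ℝ}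
    (hgm : AEStronglyMeasurable g)
    (hg : ∀ c > 0, Integrable fun u => (1 + u ^ 2) * exp (-c * u ^ 2) * g u) :
    ContinuousOn (fun σ => ∫ u, centeredGaussianPDF σ u * (u ^ 2 / σ ^ 3 - 1 / σ) * g u) {0}ᶜ := by
  intro σ₀ hσ₀
  obtain ⟨K, c, hc, hK⟩ := exists_eventually_abs_centeredGaussianPDF_deriv_le hσ₀
  exact (continuousAt_of_dominated
    (Eventually.of_forall fun σ =>
      ((measurable_centeredGaussianPDF σ).mul (by fun_prop)).aestronglyMeasurable.mul hgm)
    (hK.mono fun σ hσ => ae_of_all _ fun u => norm_mul_le_of_abs_le_mul_weight (hσ u))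
    ((hg c hc).norm.const_mul K)
    (ae_of_all _ fun u => (continuousAt_centeredGaussianPDF_deriv u hσ₀).mul continuousAt_const))
    |>.continuousWithinAt

theorem stmt_11_general (g : ℝ → ℝ) (hmeas : Measurable g)
    (C p : ℝ) (hp : 0 ≤ p)
    (hgrowth : ∀ x : ℝ, |g x| ≤ C * (1 + |x| ^ p))
    (Φ : ℝ → ℝ) (hΦ : ∀ x : ℝ, Φ x = ∫ z, g (x * z) ∂(gaussianReal 0 1)) :
    ContDiffOn ℝ 1 Φ {(0 : ℝ)}ᶜ ∧
      ∀ K : Set ℝ, Bornology.IsBounded K → IsClosed K → (0 : ℝ) ∉ K →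
        ∃ M : ℝ, ∀ x ∈ K, |deriv Φ x| ≤ M := by
  have hg (c : ℝ) (hc : 0 < c) :=
    integrable_one_add_sq_mul_exp_neg_mul_sq_mul_of_growth hmeas.aestronglyMeasurable hp hc hgrowth
  have hasDerivAt_Φ {x : ℝ} (hx : x ≠ 0) :
      HasDerivAt Φ (∫ u, centeredGaussianPDF x u * (u ^ 2 / x ^ 3 - 1 / x) * g u) x := by
    refine (hasDerivAt_integral_centeredGaussianPDF_mul hmeas.aestronglyMeasurable hg hx)
      |>.congr_of_eventuallyEq ?_
    filter_upwards [eventually_ne_nhds hx] with y hy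
    rw [hΦ, integral_comp_mul_gaussianReal g hy]
  have hcont : ContinuousOn (deriv Φ) {0}ᶜ :=
    (continuousOn_integral_centeredGaussianPDF_deriv_mul hmeas.aestronglyMeasurable hg).congr
      fun x hx => (hasDerivAt_Φ hx).deriv
  refine ⟨?_, fun K hKb hKc hK0 => ?_⟩
  · rw [contDiffOn_one_iff_derivWithin isOpen_compl_singleton.uniqueDiffOn]
    exact ⟨fun x hx => (hasDerivAt_Φ hx).differentiableAt.differentiableWithinAt,
      hcont.congr fun x hx => derivWithin_of_isOpen isOpen_compl_singleton hx⟩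
  · obtain ⟨M, hM⟩ := (Metric.isCompact_of_isClosed_isBounded hKc hKb).exists_bound_of_continuousOn
      (hcont.mono fun x hx h => hK0 (h ▸ hx))
    exact ⟨M, hM⟩

/-- for `g` Borel measurable of at most polynomial growth and
`Φ(x) = ∫ g(xz) dγ(z)` (γ the standard Gaussian measure), `Φ` is continuously differentiable
on `ℝ \ {0}`; in particular `Φ′` is bounded on every bounded closed set not containing `0`. -/
theorem stmt_11 (g : ℝ → ℝ) (hmeas : Measurable g)
    (C p : ℝ) (hC : 0 < C) (hp : 0 ≤ p)
    (hgrowth : ∀ x : ℝ, |g x| ≤ C * (1 + |x| ^ p))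
    (Φ : ℝ → ℝ) (hΦ : ∀ x : ℝ, Φ x = ∫ z, g (x * z) ∂(gaussianReal 0 1)) :
    ContDiffOn ℝ 1 Φ {(0 : ℝ)}ᶜ ∧
      ∀ K : Set ℝ, Bornology.IsBounded K → IsClosed K → (0 : ℝ) ∉ K →
        ∃ M : ℝ, ∀ x ∈ K, |deriv Φ x| ≤ M :=
  stmt_11_general g hmeas C p hp hgrowth Φ hΦ
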